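/- Let A, B ⊆ [m] with A ∪ B ≠ ∅ and D = Δ_A + wΔ_B ⊆ F_4^m. The binary subfield code C^{(2)}_{D^*} — whose codewords are the tuples c^{(2)}(α,β) = (α·d_2 + β·(d_1+d_2)) indexed by the pairs (d_1,d_2) ∈ (Δ_A × Δ_B) \ {(0,0)}, for α, β ∈ F_2^m — has length 2^{|A|+|B|} − 1, exactly 2^{|A|+|B|} distinct codewords (dimension |A|+|B| over F_2), and every nonzero codeword has Hamming weight exactly 2^{|A|+|B|−1}. Explicitly, wt(c^{(2)}(α,β)) = 2^{|A|+|B|−1}·(1 − ψ(β|A)·ψ(α+β|B)) for all α, β ∈ F_2^m. -/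

import Mathlib

open Finset

/-- The support of a binary vector, as a finset of coordinates. -/
def supp {m : ℕ} (v : Fin m → ZMod 2) : Finset (Fin m) :=
  Finset.univ.filter (fun i => v i ≠ 0)

/-- The inner product of two binary vectors. -/
def dot2 {m : ℕ} (u v : Fin m → ZMod 2) : ZMod 2 := ∑ i, u i * v i

/-- The simplicial complex generated by `A`: all binary vectors with support contained in `A`. -/
def delta {m : ℕ} (A : Finset (Fin m)) : Finset (Fin m → ZMod 2) :=
  Finset.univ.filter (fun v => supp v ⊆ A)

/-- The codeword `c^{(2)}(α,β)` of the binary subfield code, indexed by the pairs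
`(d_1,d_2) ∈ (Δ_A × Δ_B) \ {(0,0)}`. -/
def cw2 {m : ℕ} (E : Finset ((Fin m → ZMod 2) × (Fin m → ZMod 2)))
    (α β : Fin m → ZMod 2) : {p // p ∈ E} → ZMod 2 :=
  fun p => dot2 α p.1.2 + dot2 β (p.1.1 + p.1.2)

/-- The Hamming weight of the codeword `c^{(2)}(α,β)`. -/
def wt2 {m : ℕ} (E : Finset ((Fin m → ZMod 2) × (Fin m → ZMod 2)))
    (α β : Fin m → ZMod 2) : ℕ :=
  (E.filter (fun p => dot2 α p.2 + dot2 β (p.1 + p.2) ≠ 0)).card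

/-! Writing `d = d₁ + w d₂`, the entry of `c(α,β)` at `d` is `β·d₁ + (α+β)·d₂`, a linear form on
`Δ_A × Δ_B`. If it vanishes identically (i.e. `ψ(β|A) = ψ(α+β|B) = 1`) the weight is `0`; otherwise
translating by a vector on which the form is `1` swaps its zeros and ones, so exactly half of the
`2^{|A|+|B|}` points carry a `1`, and `(0,0)` is not among them. The code has `2^{|A|+|B|}`
codewords because `c(α,β)` depends only on `β` restricted to `A` and `α+β` restricted to `B`, and
its entries at `(e_i, 0)` and `(0, e_j)` recover those restrictions. -/

lemma zmod_two_eq_one_of_ne_zero {a : ZMod 2} (h : a ≠ 0) : a = 1 := by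
  revert a
  decide

lemma two_mul_card_filter_ne_zero_of_involutive {α : Type*} {s : Finset α} {f : α → ZMod 2}
    {σ : α → α} (hσ : Function.Involutive σ) (hs : ∀ a ∈ s, σ a ∈ s)
    (hf : ∀ a, f (σ a) = f a + 1) :
    2 * #{a ∈ s | f a ≠ 0} = #s := by
  have hswap : #{a ∈ s | f a = 0} = #{a ∈ s | f a ≠ 0} := by
    refine card_nbij' σ σ ?_ ?_ (fun a _ => hσ a) (fun a _ => hσ a)
    · intro a ha
      simp only [coe_filter, Set.mem_ofPred_eq] at ha ⊢
      exact ⟨hs a ha.1, by rw [hf, ha.2]; decide⟩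
    · intro a ha
      simp only [coe_filter, Set.mem_ofPred_eq] at ha ⊢
      exact ⟨hs a ha.1, by rw [hf, zmod_two_eq_one_of_ne_zero ha.2]; decide⟩
  rw [two_mul]
  nth_rewrite 1 [← hswap]
  exact card_filter_add_card_filter_not _

lemma add_add_self_right {ι : Type*} (y x : ι → ZMod 2) : y + x + x = y :=
  funext fun i => CharTwo.add_cancel_right (y i) (x i)

lemma eq_two_pow_pred_of_two_mul_eq {w n : ℕ} (h : 2 * w = 2 ^ n) : w = 2 ^ (n - 1) := by
  cases n with
  | zero => omega
  | succ n => rw [pow_succ] at h; rw [Nat.add_sub_cancel]; omega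

section Delta

variable {m : ℕ} {A : Finset (Fin m)} {u v x : Fin m → ZMod 2}

lemma supp_subset_iff : supp v ⊆ A ↔ ∀ i ∉ A, v i = 0 := by
  simp only [supp, subset_iff, mem_filter, mem_univ, true_and]
  exact forall_congr' fun i => not_imp_comm

lemma supp_inter_eq_empty_iff : supp v ∩ A = ∅ ↔ ∀ i ∈ A, v i = 0 := by
  simp [supp, eq_empty_iff_forall_notMem, imp_not_comm]

lemma mem_delta : v ∈ delta A ↔ ∀ i ∉ A, v i = 0 := by
  simp [delta, supp_subset_iff]

lemma delta_eq_piFinset :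
    delta A = Fintype.piFinset fun i => if i ∈ A then univ else {0} := by
  ext v
  simp only [mem_delta, Fintype.mem_piFinset]
  refine forall_congr' fun i => ?_
  split_ifs <;> simp [*]

lemma card_delta (A : Finset (Fin m)) : #(delta A) = 2 ^ #A := by
  simp [delta_eq_piFinset, apply_ite card, prod_ite_mem]

lemma zero_mem_delta : (0 : Fin m → ZMod 2) ∈ delta A := mem_delta.2 fun _ _ => rfl

lemma add_mem_delta (hu : u ∈ delta A) (hv : v ∈ delta A) : u + v ∈ delta A :=
  mem_delta.2 fun i hi => by simp [mem_delta.1 hu i hi, mem_delta.1 hv i hi]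

lemma single_mem_delta {i : Fin m} (hi : i ∈ A) (a : ZMod 2) : Pi.single i a ∈ delta A :=
  mem_delta.2 fun j hj => by simp [(ne_of_mem_of_not_mem hi hj).symm]

lemma eq_of_mem_delta (hu : u ∈ delta A) (hv : v ∈ delta A) (h : ∀ i ∈ A, u i = v i) : u = v := by
  funext i
  by_cases hi : i ∈ A
  · exact h i hi
  · rw [mem_delta.1 hu i hi, mem_delta.1 hv i hi]

lemma dotProduct_eq_zero_of_mem_delta (hx : ∀ i ∈ A, x i = 0) (hv : v ∈ delta A) :
    x ⬝ᵥ v = 0 :=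
  sum_eq_zero fun i _ => by
    by_cases hi : i ∈ A
    · simp [hx i hi]
    · simp [mem_delta.1 hv i hi]

lemma piecewise_dotProduct_of_mem_delta (hv : v ∈ delta A) : A.piecewise x 0 ⬝ᵥ v = x ⬝ᵥ v :=
  sum_congr rfl fun i _ => by
    by_cases hi : i ∈ A
    · simp [hi]
    · simp [mem_delta.1 hv i hi]

end Delta

section Pairs

variable {m : ℕ} {A B : Finset (Fin m)} {x y : Fin m → ZMod 2}

lemma card_filter_dotProduct_ne_zero_eq_zero (hx : ∀ i ∈ A, x i = 0) (hy : ∀ i ∈ B, y i = 0) :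
    #{p ∈ delta A ×ˢ delta B | x ⬝ᵥ p.1 + y ⬝ᵥ p.2 ≠ 0} = 0 := by
  refine card_eq_zero.2 (filter_false_of_mem fun p hp => ?_)
  rw [mem_product] at hp
  simp [dotProduct_eq_zero_of_mem_delta hx hp.1, dotProduct_eq_zero_of_mem_delta hy hp.2]

lemma two_mul_card_filter_dotProduct_ne_zero (h : (∃ i ∈ A, x i ≠ 0) ∨ ∃ i ∈ B, y i ≠ 0) :
    2 * #{p ∈ delta A ×ˢ delta B | x ⬝ᵥ p.1 + y ⬝ᵥ p.2 ≠ 0} = 2 ^ (#A + #B) := by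
  obtain ⟨e, he, hxe⟩ : ∃ e ∈ delta A ×ˢ delta B, x ⬝ᵥ e.1 + y ⬝ᵥ e.2 = 1 := by
    rcases h with ⟨i, hi, hxi⟩ | ⟨i, hi, hyi⟩
    · exact ⟨(Pi.single i 1, 0), mem_product.2 ⟨single_mem_delta hi 1, zero_mem_delta⟩,
        by simp [zmod_two_eq_one_of_ne_zero hxi]⟩
    · exact ⟨(0, Pi.single i 1), mem_product.2 ⟨zero_mem_delta, single_mem_delta hi 1⟩,
        by simp [zmod_two_eq_one_of_ne_zero hyi]⟩
  rw [mem_product] at he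
  rw [two_mul_card_filter_ne_zero_of_involutive (σ := (· + e)), card_product, card_delta,
    card_delta, pow_add]
  · intro p
    exact Prod.ext (add_add_self_right _ _) (add_add_self_right _ _)
  · intro p hp
    rw [mem_product] at hp ⊢
    exact ⟨add_mem_delta hp.1 he.1, add_mem_delta hp.2 he.2⟩
  · intro p
    simp only [Prod.fst_add, Prod.snd_add, dotProduct_add, ← hxe]
    ring

end Pairs

section Code

variable {m : ℕ} {A B : Finset (Fin m)} {α β : Fin m → ZMod 2}

lemma dot2_add_dot2_add_eq (α β d₁ d₂ : Fin m → ZMod 2) :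
    dot2 α d₂ + dot2 β (d₁ + d₂) = β ⬝ᵥ d₁ + (α + β) ⬝ᵥ d₂ := by
  change α ⬝ᵥ d₂ + β ⬝ᵥ (d₁ + d₂) = _
  rw [dotProduct_add, add_dotProduct]
  ring

lemma cw2_apply (E : Finset ((Fin m → ZMod 2) × (Fin m → ZMod 2))) (α β : Fin m → ZMod 2)
    (p : {p // p ∈ E}) : cw2 E α β p = β ⬝ᵥ p.1.1 + (α + β) ⬝ᵥ p.1.2 :=
  dot2_add_dot2_add_eq α β p.1.1 p.1.2

lemma wt2_eq_zero_iff {E : Finset ((Fin m → ZMod 2) × (Fin m → ZMod 2))} :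
    wt2 E α β = 0 ↔ cw2 E α β = 0 := by
  simp [wt2, cw2, funext_iff, filter_eq_empty_iff]

lemma wt2_erase_zero (A B : Finset (Fin m)) (α β : Fin m → ZMod 2) :
    wt2 ((delta A ×ˢ delta B).erase (0, 0)) α β
      = #{p ∈ delta A ×ˢ delta B | β ⬝ᵥ p.1 + (α + β) ⬝ᵥ p.2 ≠ 0} := by
  rw [wt2, filter_erase, erase_eq_of_notMem (by simp [dot2])]
  simp only [dot2_add_dot2_add_eq]

lemma wt2_eq_zero_of_supp_inter_eq_empty (hβ : supp β ∩ A = ∅) (hαβ : supp (α + β) ∩ B = ∅) :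
    wt2 ((delta A ×ˢ delta B).erase (0, 0)) α β = 0 := by
  rw [wt2_erase_zero]
  exact card_filter_dotProduct_ne_zero_eq_zero (supp_inter_eq_empty_iff.1 hβ)
    (supp_inter_eq_empty_iff.1 hαβ)

lemma wt2_eq_two_pow (h : ¬(supp β ∩ A = ∅ ∧ supp (α + β) ∩ B = ∅)) :
    wt2 ((delta A ×ˢ delta B).erase (0, 0)) α β = 2 ^ (#A + #B - 1) := by
  simp only [supp_inter_eq_empty_iff, not_and_or, not_forall, exists_prop] at h
  rw [wt2_erase_zero]
  exact eq_two_pow_pred_of_two_mul_eq (two_mul_card_filter_dotProduct_ne_zero h)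

lemma cw2_add_apply (E : Finset ((Fin m → ZMod 2) × (Fin m → ZMod 2))) (x y : Fin m → ZMod 2)
    (p : {p // p ∈ E}) : cw2 E (y + x) x p = x ⬝ᵥ p.1.1 + y ⬝ᵥ p.1.2 := by
  rw [cw2_apply, add_add_self_right]

lemma cw2_piecewise (α β : Fin m → ZMod 2) :
    cw2 ((delta A ×ˢ delta B).erase (0, 0)) (B.piecewise (α + β) 0 + A.piecewise β 0)
      (A.piecewise β 0) = cw2 ((delta A ×ˢ delta B).erase (0, 0)) α β := by
  funext ⟨p, hp⟩
  obtain ⟨hp₁, hp₂⟩ := mem_product.1 (mem_of_mem_erase hp)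
  rw [cw2_add_apply, cw2_apply, piecewise_dotProduct_of_mem_delta hp₁,
    piecewise_dotProduct_of_mem_delta hp₂]

lemma eq_on_of_cw2_add_eq {x y x' y' : Fin m → ZMod 2}
    (h : cw2 ((delta A ×ˢ delta B).erase (0, 0)) (y + x) x
      = cw2 ((delta A ×ˢ delta B).erase (0, 0)) (y' + x') x') :
    (∀ i ∈ A, x i = x' i) ∧ ∀ i ∈ B, y i = y' i := by
  constructor
  · intro i hi
    have hmem : (Pi.single i 1, 0) ∈ (delta A ×ˢ delta B).erase (0, 0) :=
      mem_erase.2 ⟨by simp, mem_product.2 ⟨single_mem_delta hi 1, zero_mem_delta⟩⟩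
    simpa [cw2_add_apply] using congrFun h ⟨_, hmem⟩
  · intro i hi
    have hmem : (0, Pi.single i 1) ∈ (delta A ×ˢ delta B).erase (0, 0) :=
      mem_erase.2 ⟨by simp, mem_product.2 ⟨zero_mem_delta, single_mem_delta hi 1⟩⟩
    simpa [cw2_add_apply] using congrFun h ⟨_, hmem⟩

lemma card_image_cw2 (A B : Finset (Fin m)) :
    #(univ.image fun ab : (Fin m → ZMod 2) × (Fin m → ZMod 2) =>
        cw2 ((delta A ×ˢ delta B).erase (0, 0)) ab.1 ab.2) = 2 ^ (#A + #B) := by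
  set c := fun xy : (Fin m → ZMod 2) × (Fin m → ZMod 2) =>
    cw2 ((delta A ×ˢ delta B).erase (0, 0)) (xy.2 + xy.1) xy.1
  have himage : (univ.image fun ab : (Fin m → ZMod 2) × (Fin m → ZMod 2) =>
      cw2 ((delta A ×ˢ delta B).erase (0, 0)) ab.1 ab.2) = (delta A ×ˢ delta B).image c := by
    ext w
    simp only [mem_image, mem_univ, true_and, mem_product, Prod.exists]
    constructor
    · rintro ⟨α, β, rfl⟩
      exact ⟨A.piecewise β 0, B.piecewise (α + β) 0,
        ⟨mem_delta.2 fun i hi => piecewise_eq_of_notMem _ _ _ hi,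
          mem_delta.2 fun i hi => piecewise_eq_of_notMem _ _ _ hi⟩, cw2_piecewise α β⟩
    · rintro ⟨x, y, -, rfl⟩
      exact ⟨y + x, x, rfl⟩
  have hinj : Set.InjOn c ↑(delta A ×ˢ delta B) := by
    rintro ⟨x, y⟩ hxy ⟨x', y'⟩ hxy' h
    simp only [coe_product, Set.mem_prod, mem_coe] at hxy hxy'
    obtain ⟨hA, hB⟩ := eq_on_of_cw2_add_eq h
    rw [eq_of_mem_delta hxy.1 hxy'.1 hA, eq_of_mem_delta hxy.2 hxy'.2 hB]
  rw [himage, card_image_of_injOn hinj, card_product, card_delta, card_delta, pow_add]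

end Code

theorem binary_subfield_code_simplicial_pair_general {m : ℕ}
    (A B : Finset (Fin m)) :
    ((delta A ×ˢ delta B).erase (0, 0)).card = 2 ^ (A.card + B.card) - 1
    ∧ (Finset.univ.image
        (fun ab : (Fin m → ZMod 2) × (Fin m → ZMod 2) =>
          cw2 ((delta A ×ˢ delta B).erase (0, 0)) ab.1 ab.2)).card
      = 2 ^ (A.card + B.card)
    ∧ (∀ α β : Fin m → ZMod 2,
        cw2 ((delta A ×ˢ delta B).erase (0, 0)) α β ≠ 0 →
        wt2 ((delta A ×ˢ delta B).erase (0, 0)) α β = 2 ^ (A.card + B.card - 1))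
    ∧ (∀ α β : Fin m → ZMod 2,
        wt2 ((delta A ×ˢ delta B).erase (0, 0)) α β
          = 2 ^ (A.card + B.card - 1) *
            (1 - (if supp β ∩ A = ∅ then 1 else 0) *
              (if supp (α + β) ∩ B = ∅ then 1 else 0))) := by
  refine ⟨?_, card_image_cw2 A B, fun α β hne => ?_, fun α β => ?_⟩
  · rw [card_erase_of_mem (mem_product.2 ⟨zero_mem_delta, zero_mem_delta⟩), card_product,
      card_delta, card_delta, pow_add]
  · refine wt2_eq_two_pow fun h => hne ?_
    exact wt2_eq_zero_iff.1 (wt2_eq_zero_of_supp_inter_eq_empty h.1 h.2)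
  · rw [ite_zero_mul_ite_zero, mul_one]
    by_cases h : supp β ∩ A = ∅ ∧ supp (α + β) ∩ B = ∅
    · rw [if_pos h, wt2_eq_zero_of_supp_inter_eq_empty h.1 h.2, Nat.sub_self, mul_zero]
    · rw [if_neg h, wt2_eq_two_pow h, Nat.sub_zero, mul_one]

/-- Proposition 5.1: for `A ∪ B ≠ ∅` and `D = Δ_A + wΔ_B`, the binary subfield code
`C^{(2)}_{D^*}` is a `[2^{|A|+|B|}−1, |A|+|B|, 2^{|A|+|B|−1}]` one-weight binary code;
explicitly `wt(c^{(2)}(α,β)) = 2^{|A|+|B|−1}(1 − ψ(β|A)ψ(α+β|B))`. -/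
theorem binary_subfield_code_simplicial_pair {m : ℕ} (hm : 1 ≤ m)
    (A B : Finset (Fin m)) (hAB : (A ∪ B).Nonempty) :
    ((delta A ×ˢ delta B).erase (0, 0)).card = 2 ^ (A.card + B.card) - 1
    ∧ (Finset.univ.image
        (fun ab : (Fin m → ZMod 2) × (Fin m → ZMod 2) =>
          cw2 ((delta A ×ˢ delta B).erase (0, 0)) ab.1 ab.2)).card
      = 2 ^ (A.card + B.card)
    ∧ (∀ α β : Fin m → ZMod 2,
        cw2 ((delta A ×ˢ delta B).erase (0, 0)) α β ≠ 0 →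
        wt2 ((delta A ×ˢ delta B).erase (0, 0)) α β = 2 ^ (A.card + B.card - 1))
    ∧ (∀ α β : Fin m → ZMod 2,
        wt2 ((delta A ×ˢ delta B).erase (0, 0)) α β
          = 2 ^ (A.card + B.card - 1) *
            (1 - (if supp β ∩ A = ∅ then 1 else 0) *
              (if supp (α + β) ∩ B = ∅ then 1 else 0))) :=
  binary_subfield_code_simplicial_pair_general A B
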